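/- Let f : [0,∞) → [0,∞) be a probability density that is continuous on [0,∞), continuously differentiable and strictly decreasing on (0,∞), with f(0) < ∞ and f(w) → 0 as w → ∞. Then p_k := ∫_0^∞ f(w)·b_k(w) dw converges to 1/2 as k → ∞. -/

import Mathlib

open MeasureTheory Filter Set

/-- The `k`-th fractional-bit indicator: `fracBit k w = 1` iff the remainder of `w`
modulo `2^(-k)` lies in `[2^(-k-1), 2^(-k))`, equivalently iff the fractional part
of `w * 2^k` lies in `[1/2, 1)`. -/
noncomputable def fracBit (k : ℕ) (w : ℝ) : ℝ :=
  if 1 / 2 ≤ Int.fract (w * 2 ^ k) then 1 else 0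

lemma fracBit_nonneg (k : ℕ) (w : ℝ) : 0 ≤ fracBit k w := by
  unfold fracBit; split <;> norm_num

lemma fracBit_le_one (k : ℕ) (w : ℝ) : fracBit k w ≤ 1 := by
  unfold fracBit; split <;> norm_num

lemma measurable_fracBit (k : ℕ) : Measurable (fracBit k) := by
  unfold fracBit
  exact Measurable.ite
    (measurableSet_le measurable_const (measurable_fract.comp (measurable_id.mul_const _)))
    measurable_const measurable_const

lemma fracBit_flip (k : ℕ) (v : ℝ) :
    fracBit k (v + 1 / (2 * 2 ^ k)) = 1 - fracBit k v := by
  have h2 : (2:ℝ) ^ k ≠ 0 := by positivity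
  have key : (v + 1 / (2 * 2 ^ k)) * 2 ^ k = v * 2 ^ k + 1 / 2 := by
    field_simp
  unfold fracBit
  rw [key]
  have hfr : Int.fract (v * 2 ^ k + 1 / 2) = Int.fract (Int.fract (v * 2 ^ k) + 1 / 2) := by
    conv_lhs => rw [← Int.floor_add_fract (v * 2 ^ k), add_assoc, Int.fract_intCast_add]
  rw [hfr]
  set u := Int.fract (v * 2 ^ k) with hu
  have hu0 : 0 ≤ u := Int.fract_nonneg _
  have hu1 : u < 1 := Int.fract_lt_one _
  by_cases hc : 1 / 2 ≤ u
  · have he : Int.fract (u + 1 / 2) = u - 1 / 2 := by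
      have h1 : u + 1 / 2 = (u - 1 / 2) + ((1 : ℤ) : ℝ) := by push_cast; ring
      rw [h1, Int.fract_add_intCast, Int.fract_eq_self.mpr ⟨by linarith, by linarith⟩]
    rw [he, if_pos hc, if_neg (by linarith)]
    norm_num
  · push_neg at hc
    have he : Int.fract (u + 1 / 2) = u + 1 / 2 :=
      Int.fract_eq_self.mpr ⟨by linarith, by linarith⟩
    rw [he, if_pos (by linarith), if_neg (not_le.mpr hc)]
    norm_num

lemma fracBit_eq_zero (k : ℕ) (w : ℝ) (h0 : 0 ≤ w) (h1 : w < 1 / (2 * 2 ^ k)) :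
    fracBit k w = 0 := by
  have h2 : (0:ℝ) < 2 ^ k := by positivity
  have hw : w * 2 ^ k < 1 / 2 := by
    have := mul_lt_mul_of_pos_right h1 h2
    rw [div_mul_eq_mul_div, one_mul] at this
    calc w * 2 ^ k < 2 ^ k / (2 * 2 ^ k) := this
      _ = 1 / 2 := by field_simp
  have hfr : Int.fract (w * 2 ^ k) = w * 2 ^ k :=
    Int.fract_eq_self.mpr ⟨by positivity, by linarith⟩
  unfold fracBit
  rw [hfr, if_neg (by linarith)]

lemma shift_integral (G : ℝ → ℝ) (h : ℝ) :
    ∫ v in Ici (0:ℝ), G (v + h) = ∫ w in Ici h, G w := by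
  rw [← integral_indicator measurableSet_Ici, ← integral_indicator measurableSet_Ici,
    ← integral_add_right_eq_self (Set.indicator (Ici h) G) h]
  congr 1
  funext v
  have hiff : v ∈ Ici (0:ℝ) ↔ v + h ∈ Ici h := by
    simp [Set.mem_Ici, le_add_iff_nonneg_left]
  by_cases hv : v ∈ Ici (0:ℝ)
  · rw [Set.indicator_of_mem (hiff.mp hv), Set.indicator_of_mem hv]
  · rw [Set.indicator_of_notMem (fun hh => hv (hiff.mpr hh)),
      Set.indicator_of_notMem hv]

/-- For a probability density `f` on `[0,∞)` that is continuous on `[0,∞)`, continuously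
differentiable and strictly decreasing on `(0,∞)`, with `f(w) → 0` as `w → ∞`, the
probability `p k` that the `k`-th fractional bit equals 1 converges to `1/2` as `k → ∞`. -/
theorem fractional_bit_prob_tendsto_half
    (f : ℝ → ℝ)
    (hf_nonneg : ∀ w ∈ Set.Ici (0 : ℝ), 0 ≤ f w)
    (hf_cont : ContinuousOn f (Set.Ici (0 : ℝ)))
    (hf_smooth : ContDiffOn ℝ 1 f (Set.Ioi (0 : ℝ)))
    (hf_anti : StrictAntiOn f (Set.Ioi (0 : ℝ)))
    (hf_lim : Tendsto f atTop (nhds 0))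
    (hf_int : IntegrableOn f (Set.Ici (0 : ℝ)))
    (hf_density : ∫ w in Set.Ici (0 : ℝ), f w = 1) :
    Tendsto (fun k : ℕ => ∫ w in Set.Ici (0 : ℝ), f w * fracBit k w)
      atTop (nhds (1 / 2)) := by
  -- `f` is antitone on `[0, ∞)`
  have hAnti : AntitoneOn f (Set.Ici (0:ℝ)) := by
    intro x hx y hy hxy
    rcases eq_or_lt_of_le hxy with rfl | hlt
    · exact le_refl _
    rcases eq_or_lt_of_le (Set.mem_Ici.mp hx) with hx0 | hx0
    · -- x = 0
      subst hx0
      have hy0 : (0:ℝ) < y := hlt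
      have hcont : Tendsto f (nhdsWithin 0 (Set.Ioi 0)) (nhds (f 0)) :=
        (hf_cont 0 Set.self_mem_Ici).mono_left (nhdsWithin_mono _ Set.Ioi_subset_Ici_self)
      refine ge_of_tendsto hcont ?_
      filter_upwards [Ioo_mem_nhdsGT_of_mem (by exact ⟨le_refl 0, hy0⟩ : (0:ℝ) ∈ Set.Ico 0 y)]
        with t ht
      exact (hf_anti ht.1 hy0 ht.2).le
    · exact (hf_anti hx0 (hx0.trans hlt) hlt).le
  -- key bounds for each k
  have key : ∀ k : ℕ,
      1 / 2 - 1 / (2 * 2 ^ k) * f 0 / 2 ≤ (∫ w in Set.Ici (0:ℝ), f w * fracBit k w) ∧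
      (∫ w in Set.Ici (0:ℝ), f w * fracBit k w) ≤ 1 / 2 := by
    intro k
    set h : ℝ := 1 / (2 * 2 ^ k) with hh
    have hpos : 0 < h := by positivity
    have hmeasχ : Measurable (fracBit k) := measurable_fracBit k
    -- integrability of f * χ on Ici 0
    have hint_fχ : IntegrableOn (fun w => f w * fracBit k w) (Set.Ici 0) := by
      refine MeasureTheory.Integrable.mono hf_int (hf_int.aestronglyMeasurable.mul
        (hmeasχ.aestronglyMeasurable.restrict)) ?_
      filter_upwards with w
      rw [norm_mul]
      calc ‖f w‖ * ‖fracBit k w‖ ≤ ‖f w‖ * 1 := by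
            refine mul_le_mul_of_nonneg_left ?_ (norm_nonneg _)
            rw [Real.norm_eq_abs, abs_of_nonneg (fracBit_nonneg k w)]
            exact fracBit_le_one k w
        _ = ‖f w‖ := mul_one _
    -- integrability of f(· + h) on Ici 0
    have hint_fh : IntegrableOn (fun v => f (v + h)) (Set.Ici 0) := by
      have h1 : IntegrableOn f (Set.Ici h) := hf_int.mono_set (Set.Ici_subset_Ici.mpr hpos.le)
      have h2 : Integrable (Set.indicator (Set.Ici h) f) :=
        (integrable_indicator_iff measurableSet_Ici).mpr h1
      have h3 : Integrable (fun v => Set.indicator (Set.Ici h) f (v + h)) :=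
        h2.comp_add_right h
      refine (h3.integrableOn).congr_fun ?_ measurableSet_Ici
      intro v hv
      exact Set.indicator_of_mem (by simpa [Set.mem_Ici, le_add_iff_nonneg_left] using hv) f
    -- integrability of f(·+h) * (1 - χ)
    have hmeas1χ : Measurable (fun v => 1 - fracBit k v) := measurable_const.sub hmeasχ
    have habs1χ : ∀ v, ‖1 - fracBit k v‖ ≤ 1 := by
      intro v
      rw [Real.norm_eq_abs, abs_of_nonneg (by linarith [fracBit_le_one k v])]
      linarith [fracBit_nonneg k v]
    have hint_fh1 : IntegrableOn (fun v => f (v + h) * (1 - fracBit k v)) (Set.Ici 0) := by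
      refine MeasureTheory.Integrable.mono hint_fh (hint_fh.aestronglyMeasurable.mul
        (hmeas1χ.aestronglyMeasurable.restrict)) ?_
      filter_upwards with v
      rw [norm_mul]
      calc ‖f (v + h)‖ * ‖1 - fracBit k v‖ ≤ ‖f (v + h)‖ * 1 :=
            mul_le_mul_of_nonneg_left (habs1χ v) (norm_nonneg _)
        _ = ‖f (v + h)‖ := mul_one _
    have hint_f1 : IntegrableOn (fun v => f v * (1 - fracBit k v)) (Set.Ici 0) := by
      refine MeasureTheory.Integrable.mono hf_int (hf_int.aestronglyMeasurable.mul
        (hmeas1χ.aestronglyMeasurable.restrict)) ?_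
      filter_upwards with v
      rw [norm_mul]
      calc ‖f v‖ * ‖1 - fracBit k v‖ ≤ ‖f v‖ * 1 :=
            mul_le_mul_of_nonneg_left (habs1χ v) (norm_nonneg _)
        _ = ‖f v‖ := mul_one _
    -- the key identity : ∫ f(v+h)(1-χ v) = ∫ f χ
    have hdisj : Disjoint (Set.Ico (0:ℝ) h) (Set.Ici h) :=
      Set.disjoint_of_subset_left Set.Ico_subset_Iio_self (Set.Iio_disjoint_Ici (le_refl h))
    have hsplitχ : ∫ w in Set.Ici (0:ℝ), f w * fracBit k w
        = (∫ w in Set.Ico (0:ℝ) h, f w * fracBit k w)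
          + ∫ w in Set.Ici h, f w * fracBit k w := by
      rw [← setIntegral_union hdisj measurableSet_Ici
        (hint_fχ.mono_set (fun x hx => hx.1))
        (hint_fχ.mono_set (Set.Ici_subset_Ici.mpr hpos.le)),
        Set.Ico_union_Ici_eq_Ici hpos.le]
    have hzero : ∫ w in Set.Ico (0:ℝ) h, f w * fracBit k w = 0 := by
      rw [setIntegral_congr_fun measurableSet_Ico
        (g := fun _ => (0:ℝ)) (fun w hw => by rw [fracBit_eq_zero k w hw.1 hw.2, mul_zero])]
      simp
    have hstar : ∫ v in Set.Ici (0:ℝ), f (v + h) * (1 - fracBit k v)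
        = ∫ w in Set.Ici (0:ℝ), f w * fracBit k w := by
      have e1 : Set.EqOn (fun v => f (v + h) * (1 - fracBit k v))
          (fun v => (fun w => f w * fracBit k w) (v + h)) (Set.Ici 0) := by
        intro v _
        simp only
        rw [fracBit_flip k v]
      rw [setIntegral_congr_fun measurableSet_Ici e1,
        shift_integral (fun w => f w * fracBit k w) h]
      rw [hsplitχ, hzero, zero_add]
    -- splitting total mass
    have hsplitf : (1:ℝ) = (∫ w in Set.Ico (0:ℝ) h, f w) + ∫ w in Set.Ici h, f w := by
      rw [← hf_density, ← setIntegral_union hdisj measurableSet_Ici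
        (hf_int.mono_set (fun x hx => hx.1))
        (hf_int.mono_set (Set.Ici_subset_Ici.mpr hpos.le)),
        Set.Ico_union_Ici_eq_Ici hpos.le]
    have hshiftf : ∫ v in Set.Ici (0:ℝ), f (v + h) = ∫ w in Set.Ici h, f w :=
      shift_integral f h
    -- ∫ f (1-χ) = 1 - B
    have hcompl : ∫ v in Set.Ici (0:ℝ), f v * (1 - fracBit k v)
        = 1 - ∫ w in Set.Ici (0:ℝ), f w * fracBit k w := by
      have e2 : Set.EqOn (fun v => f v * (1 - fracBit k v))
          (fun v => f v - f v * fracBit k v) (Set.Ici 0) := by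
        intro v _; ring
      rw [setIntegral_congr_fun measurableSet_Ici e2, integral_sub hf_int hint_fχ, hf_density]
    -- upper bound
    have hub : (∫ w in Set.Ici (0:ℝ), f w * fracBit k w) ≤ 1 / 2 := by
      have hmono : ∫ v in Set.Ici (0:ℝ), f (v + h) * (1 - fracBit k v)
          ≤ ∫ v in Set.Ici (0:ℝ), f v * (1 - fracBit k v) := by
        refine setIntegral_mono_on hint_fh1 hint_f1 measurableSet_Ici ?_
        intro v hv
        refine mul_le_mul_of_nonneg_right ?_ (by linarith [fracBit_le_one k v])
        exact hAnti hv (by exact add_nonneg hv hpos.le : v + h ∈ Set.Ici (0:ℝ))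
          (le_add_of_nonneg_right hpos.le)
      rw [hstar, hcompl] at hmono
      linarith
    -- lower bound
    have hlbmain : (1 - ∫ w in Set.Ici (0:ℝ), f w * fracBit k w)
        - (∫ w in Set.Ici (0:ℝ), f w * fracBit k w) ≤ ∫ w in Set.Ico (0:ℝ) h, f w := by
      have hsub : ∫ v in Set.Ici (0:ℝ), (f v * (1 - fracBit k v)
            - f (v + h) * (1 - fracBit k v))
          = (∫ v in Set.Ici (0:ℝ), f v * (1 - fracBit k v))
            - ∫ v in Set.Ici (0:ℝ), f (v + h) * (1 - fracBit k v) :=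
        integral_sub hint_f1 hint_fh1
      have hdint : IntegrableOn (fun v => f v - f (v + h)) (Set.Ici 0) := hf_int.sub hint_fh
      have hmono2 : ∫ v in Set.Ici (0:ℝ), (f v * (1 - fracBit k v)
            - f (v + h) * (1 - fracBit k v))
          ≤ ∫ v in Set.Ici (0:ℝ), (f v - f (v + h)) := by
        refine setIntegral_mono_on (hint_f1.sub hint_fh1) hdint measurableSet_Ici ?_
        intro v hv
        have hd : 0 ≤ f v - f (v + h) := by
          have := hAnti hv (by exact add_nonneg hv hpos.le : v + h ∈ Set.Ici (0:ℝ))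
            (le_add_of_nonneg_right hpos.le)
          linarith
        have : f v * (1 - fracBit k v) - f (v + h) * (1 - fracBit k v)
            = (f v - f (v + h)) * (1 - fracBit k v) := by ring
        rw [this]
        exact mul_le_of_le_one_right hd (by linarith [fracBit_nonneg k v])
      have hdiff : ∫ v in Set.Ici (0:ℝ), (f v - f (v + h))
          = ∫ w in Set.Ico (0:ℝ) h, f w := by
        rw [integral_sub hf_int hint_fh, hshiftf, hf_density]
        linarith [hsplitf]
      rw [hsub, hstar, hcompl] at hmono2
      rw [hdiff] at hmono2
      linarith
    have hIco : ∫ w in Set.Ico (0:ℝ) h, f w ≤ h * f 0 := by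
      have hconst : IntegrableOn (fun _ => f 0) (Set.Ico (0:ℝ) h) := by
        refine (integrableOn_const_iff (C := f 0)).mpr (Or.inr ?_)
        rw [Real.volume_Ico]
        exact ENNReal.ofReal_lt_top
      calc ∫ w in Set.Ico (0:ℝ) h, f w ≤ ∫ _ in Set.Ico (0:ℝ) h, f 0 := by
            refine setIntegral_mono_on (hf_int.mono_set (fun x hx => hx.1)) hconst
              measurableSet_Ico ?_
            intro w hw
            exact hAnti (Set.mem_Ici.mpr (le_refl 0)) (Set.mem_Ici.mpr hw.1) hw.1
        _ = (volume (Set.Ico (0:ℝ) h)).toReal * f 0 := by rw [setIntegral_const]; rfl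
        _ = h * f 0 := by
            rw [Real.volume_Ico, sub_zero, ENNReal.toReal_ofReal hpos.le]
    constructor
    · have := le_trans hlbmain hIco
      rw [hh] at *
      linarith
    · exact hub
  -- squeeze
  have hl : Tendsto (fun k : ℕ => 1 / 2 - 1 / (2 * 2 ^ k) * f 0 / 2) atTop (nhds (1 / 2)) := by
    have h0 : Tendsto (fun k : ℕ => (1 / (2 * 2 ^ k) : ℝ)) atTop (nhds 0) := by
      have h1 : Tendsto (fun k : ℕ => ((1:ℝ) / 2) ^ k) atTop (nhds 0) :=
        tendsto_pow_atTop_nhds_zero_of_lt_one (by norm_num) (by norm_num)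
      have h2 := h1.mul_const ((1:ℝ) / 2)
      rw [zero_mul] at h2
      refine h2.congr (fun k => ?_)
      rw [div_pow, one_pow]
      field_simp
    have h3 := ((h0.mul_const (f 0)).div_const 2)
    rw [zero_mul, zero_div] at h3
    have h4 := (tendsto_const_nhds (x := (1/2:ℝ)) (f := atTop)).sub h3
    rw [sub_zero] at h4
    exact h4
  exact tendsto_of_tendsto_of_tendsto_of_le_of_le hl tendsto_const_nhds
    (fun k => (key k).1) (fun k => (key k).2)
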